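/- arXiv:2205.11119 — 3 statements merged into one kernel-verified Lean document; each statement's English description precedes it below -/
import Mathlib

section
/- Let A_1 ∈ ℝ^{p×d_1}, …, A_n ∈ ℝ^{p×d_n} be matrices such that the horizontally concatenated matrix A = [A_1, …, A_n] ∈ ℝ^{p×d} (with d = d_1 + ⋯ + d_n) has full row rank. Let 𝒜 = diag(A_1, …, A_n) ∈ ℝ^{np×d} be the block diagonal matrix with blocks A_1, …, A_n. Let M ∈ ℝ^{n×n} be a symmetric doubly stochastic matrix, let H ∈ ℝ^{n×n} be a symmetric positive semi-definite matrix whose null space equals the span of the all-ones vector 1_n, and let c > 0 be a constant. Then the matrix (M ⊗ I_p) 𝒜 𝒜ᵀ (M ⊗ I_p) + c (H ⊗ I_p) is positive definite. -/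
open Matrix Finset
open scoped Kronecker RealInnerProductSpace

noncomputable section

/-- Eigenvalues of a real symmetric matrix, sorted in ascending order. -/
def eigsAsc {n : ℕ} (A : Matrix (Fin n) (Fin n) ℝ) : Fin n → ℝ :=
  if h : A.IsHermitian then h.eigenvalues ∘ Tuple.sort h.eigenvalues else 0

/-- Singular values (ascending): square roots of eigenvalues of `BᵀB`. -/
def svals {m n : ℕ} (B : Matrix (Fin m) (Fin n) ℝ) : Fin n → ℝ :=
  fun i => Real.sqrt (eigsAsc (Bᵀ * B) i)

/-- The (unsorted) eigenvalues of a symmetric matrix. -/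
def eigsOf {ι : Type*} [Fintype ι] [DecidableEq ι] (A : Matrix ι ι ℝ) : ι → ℝ :=
  if h : A.IsHermitian then h.eigenvalues else 0

/-- Largest singular value. -/
def smax {κ ι : Type*} [Fintype κ] [Fintype ι] [DecidableEq ι] (B : Matrix κ ι ℝ) : ℝ :=
  ⨆ i, Real.sqrt (eigsOf (Bᵀ * B) i)

/-- Smallest nonzero singular value. -/
def sminPos {κ ι : Type*} [Fintype κ] [Fintype ι] [DecidableEq ι] (B : Matrix κ ι ℝ) : ℝ :=
  sInf {x : ℝ | 0 < x ∧ ∃ i, Real.sqrt (eigsOf (Bᵀ * B) i) = x}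

/-- Smallest eigenvalue of a symmetric matrix. -/
def lmin {ι : Type*} [Fintype ι] [DecidableEq ι] (A : Matrix ι ι ℝ) : ℝ :=
  if h : A.IsHermitian then ⨅ i, h.eigenvalues i else 0

def DoublyStochastic {n : ℕ} (M : Matrix (Fin n) (Fin n) ℝ) : Prop :=
  (∀ i j, 0 ≤ M i j) ∧ (∀ i, ∑ j, M i j = 1) ∧ (∀ j, ∑ i, M i j = 1)

/-- The null space of `B` is the span of the all-ones vector. -/
def NullSpanOnes {n : ℕ} (B : Matrix (Fin n) (Fin n) ℝ) : Prop :=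
  ∀ x : Fin n → ℝ, B.mulVec x = 0 ↔ ∃ c : ℝ, x = fun _ => c

/-- Horizontal concatenation `[A_1, …, A_n]`. -/
def hcat {n p : ℕ} {d : Fin n → ℕ} (A : ∀ i, Matrix (Fin p) (Fin (d i)) ℝ) :
    Matrix (Fin p) ((i : Fin n) × Fin (d i)) ℝ :=
  Matrix.of fun q jr => A jr.1 q jr.2

/-- Block diagonal matrix `diag(A_1, …, A_n)`. -/
def bdiag {n p : ℕ} {d : Fin n → ℕ} (A : ∀ i, Matrix (Fin p) (Fin (d i)) ℝ) :
    Matrix (Fin n × Fin p) ((i : Fin n) × Fin (d i)) ℝ :=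
  Matrix.of fun iq jr => if iq.1 = jr.1 then A jr.1 iq.2 jr.2 else 0

/-- Matrix–vector product, as a map of Euclidean spaces. -/
def mvec {κ ι : Type*} [Fintype ι] [Fintype κ] (M : Matrix κ ι ℝ)
    (x : EuclideanSpace ℝ ι) : EuclideanSpace ℝ κ := WithLp.toLp 2 (M.mulVec x)

/-- Weighted squared seminorm `‖z‖²_P = zᵀ P z`. -/
def wnormSq {ι : Type*} [Fintype ι] (P : Matrix ι ι ℝ) (z : EuclideanSpace ℝ ι) : ℝ :=
  ⟪z, mvec P z⟫

/-- `s` is a subgradient of `φ` at `x`. -/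
def IsSubgrad {ι : Type*} [Fintype ι] (φ : EuclideanSpace ℝ ι → EReal)
    (x s : EuclideanSpace ℝ ι) : Prop :=
  ∀ y, φ x + ((⟪s, y - x⟫ : ℝ) : EReal) ≤ φ y

/-- `p = prox_{βφ}(u)`. -/
def IsProx {ι : Type*} [Fintype ι] (φ : EuclideanSpace ℝ ι → EReal) (β : ℝ)
    (u p : EuclideanSpace ℝ ι) : Prop :=
  ∀ y, φ p + (((2*β)⁻¹ * ‖p - u‖^2 : ℝ) : EReal) ≤ φ y + (((2*β)⁻¹ * ‖y - u‖^2 : ℝ) : EReal)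

/-- Convex conjugate. -/
def econj {ι : Type*} [Fintype ι] (h : EuclideanSpace ℝ ι → EReal)
    (l : EuclideanSpace ℝ ι) : EReal :=
  ⨆ y, ((⟪l, y⟫ : ℝ) : EReal) - h y

/-- Proper, closed (lower semicontinuous) and convex extended-real-valued function. -/
def ProperClosedConvex {ι : Type*} [Fintype ι] (φ : EuclideanSpace ℝ ι → EReal) : Prop :=
  (∀ x, φ x ≠ ⊥) ∧ (∃ x, φ x ≠ ⊤) ∧ LowerSemicontinuous φ ∧
    ∀ x y : EuclideanSpace ℝ ι, ∀ a b : ℝ, 0 ≤ a → 0 ≤ b → a + b = 1 →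
      φ (a • x + b • y) ≤ (a : EReal) * φ x + (b : EReal) * φ y

/-- Replicate a vector `n` times: `1_n ⊗ λ`. -/
def repBlock {n p : ℕ} (lam : EuclideanSpace ℝ (Fin p)) :
    EuclideanSpace ℝ (Fin n × Fin p) := WithLp.toLp 2 (fun iq : Fin n × Fin p => lam iq.2)

/-- Extract the `i`-th block of a stacked vector. -/
def blk {n p : ℕ} (z : EuclideanSpace ℝ (Fin n × Fin p)) (i : Fin n) :
    EuclideanSpace ℝ (Fin p) := WithLp.toLp 2 (fun q => z (i, q))

/-- `h̄(ℓ) = (1/n) Σᵢ h*(λᵢ)`. -/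
def hbar {n p : ℕ} (hs : EuclideanSpace ℝ (Fin p) → EReal)
    (z : EuclideanSpace ℝ (Fin n × Fin p)) : EReal :=
  (((n : ℝ)⁻¹ : ℝ) : EReal) * ∑ i : Fin n, hs (blk z i)


/-- Kronecker product with the `p × p` identity: `B ⊗ I_p`. -/
def KI {n : ℕ} (p : ℕ) (B : Matrix (Fin n) (Fin n) ℝ) :
    Matrix (Fin n × Fin p) (Fin n × Fin p) ℝ :=
  B ⊗ₖ (1 : Matrix (Fin p) (Fin p) ℝ)

/-! Put `𝓑 = 𝒜ᵀ (M ⊗ I_p)`. Since `M` is symmetric, the first summand is the Gram matrix `𝓑ᵀ 𝓑`, so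
both summands are positive semidefinite and it suffices that their kernels meet only in `0`.
The kernel of `H ⊗ I_p` consists of the vectors `1_n ⊗ λ`. These are fixed by `M ⊗ I_p` because
the rows of `M` sum to `1`, and `𝒜ᵀ` maps `1_n ⊗ λ` to `Aᵀ λ`, which vanishes only for `λ = 0`
because `A Aᵀ` is positive definite. -/

namespace Matrix

open scoped ComplexOrder in
theorem PosSemidef.posDef_add_of_ker {𝕜 ι : Type*} [RCLike 𝕜] [Fintype ι] {P Q : Matrix ι ι 𝕜}
    (hP : P.PosSemidef) (hQ : Q.PosSemidef) (hker : ∀ x, P *ᵥ x = 0 → Q *ᵥ x = 0 → x = 0) :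
    (P + Q).PosDef := by
  refine PosDef.of_dotProduct_mulVec_pos (hP.isHermitian.add hQ.isHermitian) fun x hx => ?_
  have hPx := hP.dotProduct_mulVec_nonneg x
  have hQx := hQ.dotProduct_mulVec_nonneg x
  rw [add_mulVec, dotProduct_add]
  refine (add_nonneg hPx hQx).lt_of_ne fun h => hx ?_
  obtain ⟨hP0, hQ0⟩ := (add_eq_zero_iff_of_nonneg hPx hQx).1 h.symm
  exact hker x ((hP.dotProduct_mulVec_zero_iff x).1 hP0) ((hQ.dotProduct_mulVec_zero_iff x).1 hQ0)

theorem PosDef.eq_zero_of_transpose_mulVec_eq_zero {m k : Type*} [Fintype m] [Fintype k]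
    [DecidableEq m] {A : Matrix m k ℝ} (hA : (A * Aᵀ).PosDef) {v : m → ℝ} (hv : Aᵀ *ᵥ v = 0) :
    v = 0 :=
  mulVec_injective_of_isUnit hA.isUnit <| by rw [← mulVec_mulVec, hv, mulVec_zero, mulVec_zero]

section KroneckerOne

variable {R ι ι' κ : Type*} [Semiring R] [Fintype ι'] [Fintype κ] [DecidableEq κ]

theorem kronecker_one_mulVec_apply (B : Matrix ι ι' R) (x : ι' × κ → R) (i : ι) (q : κ) :
    ((B ⊗ₖ (1 : Matrix κ κ R)) *ᵥ x) (i, q) = (B *ᵥ fun j => x (j, q)) i := by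
  simp [mulVec, dotProduct, Fintype.sum_prod_type, one_apply]

theorem kronecker_one_mulVec_eq_zero_iff (B : Matrix ι ι' R) (x : ι' × κ → R) :
    (B ⊗ₖ (1 : Matrix κ κ R)) *ᵥ x = 0 ↔ ∀ q, (B *ᵥ fun j => x (j, q)) = 0 := by
  simp only [funext_iff, Prod.forall, kronecker_one_mulVec_apply, Pi.zero_apply]
  exact forall_comm

theorem kronecker_one_mulVec_const_left (B : Matrix ι ι' R) (v : κ → R) :
    (B ⊗ₖ (1 : Matrix κ κ R)) *ᵥ (fun jq => v jq.2) = fun iq => (∑ j, B iq.1 j) * v iq.2 := by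
  ext ⟨i, q⟩
  rw [kronecker_one_mulVec_apply, mulVec, dotProduct, Finset.sum_mul]

end KroneckerOne

end Matrix

theorem KI_transpose {n : ℕ} (p : ℕ) (B : Matrix (Fin n) (Fin n) ℝ) : (KI p B)ᵀ = KI p Bᵀ := by
  rw [KI, KI, ← kroneckerMap_transpose, transpose_one]

theorem KI_mulVec_const_left {n p : ℕ} {M : Matrix (Fin n) (Fin n) ℝ}
    (hM : ∀ i, ∑ j, M i j = 1) (v : Fin p → ℝ) :
    KI p M *ᵥ (fun iq => v iq.2) = fun iq => v iq.2 := by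
  simp only [KI, kronecker_one_mulVec_const_left, hM, one_mul]

theorem NullSpanOnes.exists_eq_of_KI_mulVec_eq_zero {n p : ℕ} {H : Matrix (Fin n) (Fin n) ℝ}
    (hH : NullSpanOnes H) {x : Fin n × Fin p → ℝ} (hx : KI p H *ᵥ x = 0) :
    ∃ v : Fin p → ℝ, x = fun iq => v iq.2 := by
  choose v hv using fun q => (hH _).1 ((kronecker_one_mulVec_eq_zero_iff H x).1 hx q)
  exact ⟨v, funext fun ⟨i, q⟩ => congrFun (hv q) i⟩

theorem bdiag_transpose_mulVec_const_left {n p : ℕ} {d : Fin n → ℕ}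
    (A : ∀ i, Matrix (Fin p) (Fin (d i)) ℝ) (v : Fin p → ℝ) :
    (bdiag A)ᵀ *ᵥ (fun iq => v iq.2) = (hcat A)ᵀ *ᵥ v := by
  ext ⟨j, r⟩
  simp [mulVec, dotProduct, bdiag, hcat, Fintype.sum_prod_type]

theorem kron_blockDiag_posDef_general {n p : ℕ} {d : Fin n → ℕ}
    (A : ∀ i, Matrix (Fin p) (Fin (d i)) ℝ)
    (hA : (hcat A * (hcat A)ᵀ).PosDef)
    (M H : Matrix (Fin n) (Fin n) ℝ)
    (hMsymm : M.IsSymm) (hM : DoublyStochastic M)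
    (hHpsd : H.PosSemidef) (hHnull : NullSpanOnes H)
    (c : ℝ) (hc : 0 < c) :
    (KI p M * bdiag A * (bdiag A)ᵀ * KI p M + c • KI p H).PosDef := by
  have hgram : KI p M * bdiag A * (bdiag A)ᵀ * KI p M
      = ((bdiag A)ᵀ * KI p M)ᴴ * ((bdiag A)ᵀ * KI p M) := by
    rw [conjTranspose_eq_transpose_of_trivial, transpose_mul, transpose_transpose, KI_transpose,
      hMsymm.eq]
    simp only [Matrix.mul_assoc]
  rw [hgram]
  refine (posSemidef_conjTranspose_mul_self _).posDef_add_of_ker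
    ((hHpsd.kronecker PosSemidef.one).smul hc.le) fun x hBx hHx => ?_
  rw [conjTranspose_mul_self_mulVec_eq_zero] at hBx
  rw [smul_mulVec, smul_eq_zero_iff_right hc.ne'] at hHx
  obtain ⟨v, rfl⟩ := hHnull.exists_eq_of_KI_mulVec_eq_zero hHx
  rw [← mulVec_mulVec, KI_mulVec_const_left hM.2.1, bdiag_transpose_mulVec_const_left] at hBx
  rw [hA.eq_zero_of_transpose_mulVec_eq_zero hBx]
  rfl

/-- If `A = [A_1, …, A_n]` has full row rank, `M` is symmetric doubly
stochastic, `H` is symmetric PSD with null space `span(1_n)` and `c > 0`, then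
`(M ⊗ I_p) 𝒜 𝒜ᵀ (M ⊗ I_p) + c (H ⊗ I_p)` is positive definite, where
`𝒜 = diag(A_1, …, A_n)`. -/
theorem kron_blockDiag_posDef {n p : ℕ} {d : Fin n → ℕ}
    (A : ∀ i, Matrix (Fin p) (Fin (d i)) ℝ)
    (hA : (hcat A * (hcat A)ᵀ).PosDef)
    (M H : Matrix (Fin n) (Fin n) ℝ)
    (hMsymm : M.IsSymm) (hM : DoublyStochastic M)
    (hHsymm : H.IsSymm) (hHpsd : H.PosSemidef) (hHnull : NullSpanOnes H)
    (c : ℝ) (hc : 0 < c) :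
    (KI p M * bdiag A * (bdiag A)ᵀ * KI p M + c • KI p H).PosDef :=
  kron_blockDiag_posDef_general A hA M H hMsymm hM hHpsd hHnull c hc

end
end

section
/- Let f : ℝ^d → ℝ be μ-strongly convex and differentiable, let g : ℝ^d → ℝ ∪ {+∞} be proper closed convex, let h* : ℝ^p → ℝ ∪ {+∞} be proper closed convex, and let A ∈ ℝ^{p×d}. Suppose either (a) g = 0 and A has full row rank, or (b) h* is ν-strongly convex for some ν > 0. Then there is at most one pair (x*, λ*) ∈ ℝ^d × ℝ^p satisfying the optimality conditions 0 ∈ ∇f(x*) + Aᵀλ* + ∂g(x*) and Ax* ∈ ∂h*(λ*). -/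
open Matrix Finset
open scoped Kronecker RealInnerProductSpace

noncomputable section

/-! Subtracting the two optimality systems and pairing with `x - x'` gives
`μ‖x - x'‖² ≤ ⟪∇f x - ∇f x', x - x'⟫ = -⟪s - s', x - x'⟫ - ⟪A x - A x', λ - λ'⟫ ≤ 0`
by monotonicity of `∂g` and `∂h*`, so `x = x'`. The multiplier is then pinned down at the common
point `A x`: in case (b) by strong monotonicity of `∂h*`; in case (a) because the only subgradient
of `g = 0` is `0`, so `Aᵀλ = -∇f x = Aᵀλ'`, and `Aᵀ` is injective when `AAᵀ` is positive definite. -/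

section Subgradient

variable {ι : Type*} [Fintype ι] {φ : EuclideanSpace ℝ ι → EReal} {x y z s t : EuclideanSpace ℝ ι}

lemma IsSubgrad.ne_top (hs : IsSubgrad φ x s) (hz : φ z ≠ ⊤) : φ x ≠ ⊤ := by
  intro hx
  have := hs z
  rw [hx, EReal.top_add_coe, top_le_iff] at this
  exact hz this

lemma IsSubgrad.inner_sub_nonneg (hbot : ∀ x, φ x ≠ ⊥) (hdom : ∃ z, φ z ≠ ⊤)
    (hs : IsSubgrad φ x s) (ht : IsSubgrad φ y t) : 0 ≤ ⟪s - t, x - y⟫ := by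
  obtain ⟨z, hz⟩ := hdom
  have hx : φ x = ((φ x).toReal : EReal) := (EReal.coe_toReal (hs.ne_top hz) (hbot x)).symm
  have hy : φ y = ((φ y).toReal : EReal) := (EReal.coe_toReal (ht.ne_top hz) (hbot y)).symm
  have hxy := hs y
  have hyx := ht x
  rw [hx, hy, ← EReal.coe_add, EReal.coe_le_coe_iff] at hxy hyx
  rw [← neg_sub x y, inner_neg_right] at hxy
  rw [inner_sub_left]
  linarith

lemma IsSubgrad.eq_zero_of_zero (hs : IsSubgrad (fun _ => (0 : EReal)) x s) : s = 0 := by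
  have h : ⟪s, x + s - x⟫ ≤ 0 := EReal.coe_nonpos.mp (by simpa only [zero_add] using hs (x + s))
  rw [add_sub_cancel_left, real_inner_self_eq_norm_sq] at h
  exact norm_eq_zero.mp (by nlinarith [norm_nonneg s])

end Subgradient

lemma eq_of_mul_norm_sub_sq_nonpos {E : Type*} [NormedAddCommGroup E] {c : ℝ} {u v : E}
    (hc : 0 < c) (h : c * ‖u - v‖ ^ 2 ≤ 0) : u = v := by
  have : ‖u - v‖ ^ 2 ≤ 0 := nonpos_of_mul_nonpos_right h hc
  exact sub_eq_zero.mp (norm_eq_zero.mp (pow_eq_zero_iff two_ne_zero |>.mp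
    (le_antisymm this (sq_nonneg _))))

section MatrixVector

variable {κ ι : Type*} [Fintype κ] [Fintype ι]

lemma mvec_eq_toEuclideanLin [DecidableEq ι] (M : Matrix κ ι ℝ) (x : EuclideanSpace ℝ ι) :
    mvec M x = M.toEuclideanLin x := rfl

lemma mvec_sub (M : Matrix κ ι ℝ) (x y : EuclideanSpace ℝ ι) :
    mvec M (x - y) = mvec M x - mvec M y := by
  classical
  simp only [mvec_eq_toEuclideanLin, map_sub]

lemma inner_mvec_transpose (A : Matrix κ ι ℝ) (v : EuclideanSpace ℝ κ)
    (w : EuclideanSpace ℝ ι) : ⟪mvec Aᵀ v, w⟫ = ⟪v, mvec A w⟫ := by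
  classical
  rw [mvec_eq_toEuclideanLin, mvec_eq_toEuclideanLin, ← conjTranspose_eq_transpose_of_trivial,
    toEuclideanLin_conjTranspose_eq_adjoint, LinearMap.adjoint_inner_left]

lemma mvec_transpose_injective {A : Matrix κ ι ℝ} (hA : (A * Aᵀ).PosDef) :
    Function.Injective (mvec Aᵀ) := by
  classical
  intro v w hvw
  have h : (A * Aᵀ) *ᵥ v.ofLp = (A * Aᵀ) *ᵥ w.ofLp := by
    rw [← mulVec_mulVec, ← mulVec_mulVec]
    exact congrArg (A *ᵥ ·) (congrArg WithLp.ofLp hvw)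
  exact WithLp.ofLp_injective 2 (mulVec_injective_iff_isUnit.mpr hA.isUnit h)

lemma inner_sub_eq_of_add_mvec_transpose_add_eq_zero {A : Matrix κ ι ℝ}
    {x x' u u' s s' : EuclideanSpace ℝ ι} {lam lam' : EuclideanSpace ℝ κ}
    (he : u + mvec Aᵀ lam + s = 0) (he' : u' + mvec Aᵀ lam' + s' = 0) :
    ⟪s - s', x - x'⟫ = -⟪u - u', x - x'⟫ - ⟪mvec A x - mvec A x', lam - lam'⟫ := by
  have hdiff : s - s' = -(u - u') - mvec Aᵀ (lam - lam') := by
    rw [eq_neg_of_add_eq_zero_right he, eq_neg_of_add_eq_zero_right he', mvec_sub]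
    abel
  rw [hdiff, inner_sub_left, inner_neg_left, inner_mvec_transpose, ← mvec_sub,
    real_inner_comm _ (lam - lam')]

end MatrixVector

theorem saddle_point_unique_general {d p : ℕ} (μ : ℝ) (hμ : 0 < μ)
    (gf : EuclideanSpace ℝ (Fin d) → EuclideanSpace ℝ (Fin d))
    (hsc : ∀ x y, μ * ‖x - y‖ ^ 2 ≤ ⟪gf x - gf y, x - y⟫)
    (g : EuclideanSpace ℝ (Fin d) → EReal) (hg : ProperClosedConvex g)
    (hs : EuclideanSpace ℝ (Fin p) → EReal) (hhs : ProperClosedConvex hs)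
    (A : Matrix (Fin p) (Fin d) ℝ)
    (hcase : (g = (fun _ => (0 : EReal)) ∧ (A * Aᵀ).PosDef) ∨
      (∃ ν : ℝ, 0 < ν ∧ ∀ y y' s s', IsSubgrad hs y s → IsSubgrad hs y' s' →
        ν * ‖y - y'‖ ^ 2 ≤ ⟪s - s', y - y'⟫)) :
    ∀ (x x' : EuclideanSpace ℝ (Fin d)) (lam lam' : EuclideanSpace ℝ (Fin p)),
      (∃ s, IsSubgrad g x s ∧ gf x + mvec Aᵀ lam + s = 0) →
      IsSubgrad hs lam (mvec A x) →
      (∃ s, IsSubgrad g x' s ∧ gf x' + mvec Aᵀ lam' + s = 0) →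
      IsSubgrad hs lam' (mvec A x') →
      x = x' ∧ lam = lam' := by
  rintro x x' lam lam' ⟨s, hgs, hopt⟩ hAx ⟨s', hgs', hopt'⟩ hAx'
  have hmono_g := hgs.inner_sub_nonneg hg.1 hg.2.1 hgs'
  have hmono_h := hAx.inner_sub_nonneg hhs.1 hhs.2.1 hAx'
  have hx : x = x' := eq_of_mul_norm_sub_sq_nonpos hμ <| by
    linarith [hsc x x',
      inner_sub_eq_of_add_mvec_transpose_add_eq_zero (x := x) (x' := x') hopt hopt']
  subst hx
  refine ⟨rfl, ?_⟩
  rcases hcase with ⟨rfl, hA⟩ | ⟨ν, hν, hstrong⟩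
  · rw [hgs.eq_zero_of_zero, add_zero] at hopt
    rw [hgs'.eq_zero_of_zero, add_zero] at hopt'
    exact mvec_transpose_injective hA (add_left_cancel (hopt.trans hopt'.symm))
  · exact eq_of_mul_norm_sub_sq_nonpos hν <| by simpa using hstrong _ _ _ _ hAx hAx'

/-- Uniqueness of the pair `(x*, λ*)` satisfying the optimality conditions
`0 ∈ ∇f(x*) + Aᵀλ* + ∂g(x*)` and `Ax* ∈ ∂h*(λ*)`, under strong convexity of `f` and either
(a) `g = 0` and `A` of full row rank, or (b) `h*` strongly convex. -/
theorem saddle_point_unique {d p : ℕ} (μ : ℝ) (hμ : 0 < μ)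
    (f : EuclideanSpace ℝ (Fin d) → ℝ)
    (gf : EuclideanSpace ℝ (Fin d) → EuclideanSpace ℝ (Fin d))
    (hdiff : ∀ x, HasGradientAt f (gf x) x)
    (hsc : ∀ x y, μ * ‖x - y‖ ^ 2 ≤ ⟪gf x - gf y, x - y⟫)
    (g : EuclideanSpace ℝ (Fin d) → EReal) (hg : ProperClosedConvex g)
    (hs : EuclideanSpace ℝ (Fin p) → EReal) (hhs : ProperClosedConvex hs)
    (A : Matrix (Fin p) (Fin d) ℝ)
    (hcase : (g = (fun _ => (0 : EReal)) ∧ (A * Aᵀ).PosDef) ∨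
      (∃ ν : ℝ, 0 < ν ∧ ∀ y y' s s', IsSubgrad hs y s → IsSubgrad hs y' s' →
        ν * ‖y - y'‖ ^ 2 ≤ ⟪s - s', y - y'⟫)) :
    ∀ (x x' : EuclideanSpace ℝ (Fin d)) (lam lam' : EuclideanSpace ℝ (Fin p)),
      (∃ s, IsSubgrad g x s ∧ gf x + mvec Aᵀ lam + s = 0) →
      IsSubgrad hs lam (mvec A x) →
      (∃ s, IsSubgrad g x' s ∧ gf x' + mvec Aᵀ lam' + s = 0) →
      IsSubgrad hs lam' (mvec A x') →
      x = x' ∧ lam = lam' :=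
  saddle_point_unique_general μ hμ gf hsc g hg hs hhs A hcase

end
end

section
/- Let f : ℝ^d → ℝ be differentiable, μ-strongly convex, and l-smooth. Then for all u, x, y ∈ ℝ^d: ⟨u − y, ∇f(x) − ∇f(y)⟩ ≥ −(l − μ/2)‖u − x‖² + (μ/2)( ‖u − y‖² + ‖x − y‖² ). -/
open Matrix Finset
open scoped Kronecker RealInnerProductSpace

noncomputable section

/-!
Sum the smoothness upper bound at `(u, x)` with the strong-convexity lower bounds at `(y, x)` and
`(u, y)`: the function values cancel, leaving the claim with `-(l / 2)` in place of `-(l - μ / 2)`.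
The two bounds at the same pair of points force `μ ≤ l` in every direction, which closes the gap.
-/

section QuadraticBounds

variable {E : Type*} [NormedAddCommGroup E] [InnerProductSpace ℝ E] {f : E → ℝ} {g : E → E}
  {μ l : ℝ}

theorem mul_norm_sub_sq_le_of_quadratic_bounds
    (hsc : ∀ x y, f x ≥ f y + ⟪g y, x - y⟫ + μ / 2 * ‖x - y‖ ^ 2)
    (hsm : ∀ x y, f x ≤ f y + ⟪g y, x - y⟫ + l / 2 * ‖x - y‖ ^ 2) (x y : E) :
    μ * ‖x - y‖ ^ 2 ≤ l * ‖x - y‖ ^ 2 := by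
  linarith [hsc x y, hsm x y]

theorem inner_sub_gradient_sub_ge_of_quadratic_bounds
    (hsc : ∀ x y, f x ≥ f y + ⟪g y, x - y⟫ + μ / 2 * ‖x - y‖ ^ 2)
    (hsm : ∀ x y, f x ≤ f y + ⟪g y, x - y⟫ + l / 2 * ‖x - y‖ ^ 2) (u x y : E) :
    -(l / 2) * ‖u - x‖ ^ 2 + μ / 2 * (‖u - y‖ ^ 2 + ‖x - y‖ ^ 2) ≤ ⟪u - y, g x - g y⟫ := by
  have hinner : ⟪u - y, g x - g y⟫ = ⟪g x, u - x⟫ - ⟪g x, y - x⟫ - ⟪g y, u - y⟫ := by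
    simp only [inner_sub_left, inner_sub_right, real_inner_comm]
    ring
  have hsc_yx := hsc y x
  rw [norm_sub_rev] at hsc_yx
  rw [hinner]
  linarith [hsm u x, hsc u y]

end QuadraticBounds

theorem inner_grad_lower_bound_general {d : ℕ} (μ l : ℝ)
    (f : EuclideanSpace ℝ (Fin d) → ℝ) (gf : EuclideanSpace ℝ (Fin d) → EuclideanSpace ℝ (Fin d))
    (hsc : ∀ x y, f x ≥ f y + ⟪gf y, x - y⟫ + μ / 2 * ‖x - y‖ ^ 2)
    (hsm : ∀ x y, f x ≤ f y + ⟪gf y, x - y⟫ + l / 2 * ‖x - y‖ ^ 2) :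
    ∀ u x y : EuclideanSpace ℝ (Fin d),
      ⟪u - y, gf x - gf y⟫ ≥
        -(l - μ / 2) * ‖u - x‖ ^ 2 + μ / 2 * (‖u - y‖ ^ 2 + ‖x - y‖ ^ 2) := by
  intro u x y
  have hthree := inner_sub_gradient_sub_ge_of_quadratic_bounds hsc hsm u x y
  have hμl := mul_norm_sub_sq_le_of_quadratic_bounds hsc hsm u x
  linarith

/-- For `f` differentiable, `μ`-strongly convex and `l`-smooth,
`⟨u − y, ∇f(x) − ∇f(y)⟩ ≥ −(l − μ/2)‖u − x‖² + (μ/2)(‖u − y‖² + ‖x − y‖²)`. -/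
theorem inner_grad_lower_bound {d : ℕ} (μ l : ℝ)
    (f : EuclideanSpace ℝ (Fin d) → ℝ) (gf : EuclideanSpace ℝ (Fin d) → EuclideanSpace ℝ (Fin d))
    (hdiff : ∀ x, HasGradientAt f (gf x) x)
    (hsc : ∀ x y, f x ≥ f y + ⟪gf y, x - y⟫ + μ / 2 * ‖x - y‖ ^ 2)
    (hsm : ∀ x y, f x ≤ f y + ⟪gf y, x - y⟫ + l / 2 * ‖x - y‖ ^ 2) :
    ∀ u x y : EuclideanSpace ℝ (Fin d),
      ⟪u - y, gf x - gf y⟫ ≥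
        -(l - μ / 2) * ‖u - x‖ ^ 2 + μ / 2 * (‖u - y‖ ^ 2 + ‖x - y‖ ^ 2) :=
  inner_grad_lower_bound_general μ l f gf hsc hsm

end
end
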